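/- Consider the discrete-time quantum walk search on the n-dimensional hypercube, n ≥ 2. Suppose the marked set M can be partitioned into disjoint pairs of adjacent vertices: there is a set P of pairs such that each pair {i,j} ∈ P consists of vertices differing in exactly one bit (say bit c_{ij}), the pairs are pairwise disjoint, and M is the union of the pairs. Then the state φ = a·Σ_{v,c}|v,c⟩ − an·Σ_{{i,j}∈P}(|i, c_{ij}⟩ + |j, c_{ij}⟩), having amplitude −(n−1)a on the two basis states of each pair pointing to each other and amplitude a elsewhere, satisfies U′φ = φ. -/

import Mathlib

/-- Discrete-time quantum walk on the `n`-dimensional hypercube.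
Vertices are binary strings `v : Fin n → Bool`; basis states are `(v, c)` with coin
direction `c : Fin n`. `flipBit v c` flips bit `c` of `v` (i.e. `v ⊕ e_c`). -/
def HypercubeWalk.flipBit (n : ℕ) (v : Fin n → Bool) (c : Fin n) : Fin n → Bool :=
  Function.update v c (!(v c))

/-- The shift operator `S`, with `S|v, c⟩ = |v ⊕ e_c, c⟩`. -/
noncomputable def HypercubeWalk.shift (n : ℕ) (ψ : (Fin n → Bool) × Fin n → ℂ) :
    (Fin n → Bool) × Fin n → ℂ :=
  fun e => ψ (HypercubeWalk.flipBit n e.1 e.2, e.2)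

/-- The Grover coin `I ⊗ C`, `(Cψ)(v, c) = (2/n) Σ_{c'} ψ(v, c') − ψ(v, c)`. -/
noncomputable def HypercubeWalk.coin (n : ℕ) (ψ : (Fin n → Bool) × Fin n → ℂ) :
    (Fin n → Bool) × Fin n → ℂ :=
  fun e => (2 / (n : ℂ)) * (∑ c' : Fin n, ψ (e.1, c')) - ψ e

/-- The query `Q ⊗ I`, flipping the sign at marked vertices. -/
noncomputable def HypercubeWalk.query (n : ℕ) (M : Finset (Fin n → Bool))
    (ψ : (Fin n → Bool) × Fin n → ℂ) : (Fin n → Bool) × Fin n → ℂ :=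
  fun e => if e.1 ∈ M then -ψ e else ψ e

/-- One step of the search algorithm, `U' = S · (I ⊗ C) · (Q ⊗ I)`. -/
noncomputable def HypercubeWalk.step (n : ℕ) (M : Finset (Fin n → Bool))
    (ψ : (Fin n → Bool) × Fin n → ℂ) : (Fin n → Bool) × Fin n → ℂ :=
  HypercubeWalk.shift n (HypercubeWalk.coin n (HypercubeWalk.query n M ψ))


/-!
At an unmarked vertex the state is constant across coin directions, and the Grover coin fixes
constant vectors. At a marked vertex exactly one direction is paired, so the amplitudes there
sum to `-(n-1)a + (n-1)a = 0`; on such vectors the coin acts as `-1`, undoing the query's sign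
flip. Finally the state gives both darts of every edge the same amplitude, so the shift fixes it.
-/

theorem Fintype.sum_ite_neg_card_sub_one_mul_eq_zero {ι R : Type*} [Fintype ι] [DecidableEq ι]
    [CommRing R] (i₀ : ι) (a : R) :
    ∑ i : ι, (if i = i₀ then -((Fintype.card ι : R) - 1) * a else a) = 0 := by
  have split : ∀ i : ι, (if i = i₀ then -((Fintype.card ι : R) - 1) * a else a) =
      a - if i = i₀ then (Fintype.card ι : R) * a else 0 := by
    intro i
    split_ifs <;> ring
  rw [Fintype.sum_congr _ _ split, Finset.sum_sub_distrib]
  simp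

namespace HypercubeWalk

variable {n : ℕ}

theorem flipBit_flipBit (v : Fin n → Bool) (c : Fin n) : flipBit n (flipBit n v c) c = v := by
  simp [flipBit]

theorem flipBit_ne (v : Fin n → Bool) (c : Fin n) : flipBit n v c ≠ v := fun h => by
  simpa [flipBit] using congrFun h c

theorem flipBit_injective (v : Fin n → Bool) : Function.Injective (flipBit n v) := by
  intro c c' h
  by_contra hne
  simpa [flipBit, Function.update_of_ne hne] using congrFun h c

theorem shift_eq_self {ψ : (Fin n → Bool) × Fin n → ℂ}
    (hsymm : ∀ v c, ψ (flipBit n v c, c) = ψ (v, c)) : shift n ψ = ψ :=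
  funext fun e => hsymm e.1 e.2

theorem coin_apply_of_sum_eq_zero {ψ : (Fin n → Bool) × Fin n → ℂ} {v : Fin n → Bool}
    (hsum : ∑ c, ψ (v, c) = 0) (c : Fin n) : coin n ψ (v, c) = -ψ (v, c) := by
  simp [coin, hsum]

theorem coin_apply_of_const {ψ : (Fin n → Bool) × Fin n → ℂ} {v : Fin n → Bool} {c : Fin n}
    (hconst : ∀ c', ψ (v, c') = ψ (v, c)) : coin n ψ (v, c) = ψ (v, c) := by
  have hn : (n : ℂ) ≠ 0 := Nat.cast_ne_zero.mpr c.pos.ne'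
  simp only [coin, hconst, Finset.sum_const, Finset.card_univ, Fintype.card_fin, nsmul_eq_mul]
  field_simp
  ring

theorem coin_query_eq_self {M : Finset (Fin n → Bool)} {ψ : (Fin n → Bool) × Fin n → ℂ}
    (hconst : ∀ v ∉ M, ∀ c c', ψ (v, c') = ψ (v, c)) (hsum : ∀ v ∈ M, ∑ c, ψ (v, c) = 0) :
    coin n (query n M ψ) = ψ := by
  funext ⟨v, c⟩
  by_cases hv : v ∈ M
  · rw [coin_apply_of_sum_eq_zero] <;> simp [query, hv, hsum]
  · rw [coin_apply_of_const] <;> simp [query, hv, hconst v hv c]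

theorem step_eq_self {M : Finset (Fin n → Bool)} {ψ : (Fin n → Bool) × Fin n → ℂ}
    (hsymm : ∀ v c, ψ (flipBit n v c, c) = ψ (v, c))
    (hconst : ∀ v ∉ M, ∀ c c', ψ (v, c') = ψ (v, c)) (hsum : ∀ v ∈ M, ∑ c, ψ (v, c) = 0) :
    step n M ψ = ψ := by
  rw [step, coin_query_eq_self hconst hsum, shift_eq_self hsymm]

section Pairing

variable (P : Finset ((Fin n → Bool) × (Fin n → Bool)))

abbrev IsPairedDart (v : Fin n → Bool) (c : Fin n) : Prop :=
  (v, flipBit n v c) ∈ P ∨ (flipBit n v c, v) ∈ P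

variable {P}

theorem isPairedDart_flipBit_iff {v : Fin n → Bool} {c : Fin n} :
    IsPairedDart P (flipBit n v c) c ↔ IsPairedDart P v c := by
  simp only [IsPairedDart, flipBit_flipBit, or_comm]

theorem mem_biUnion_of_isPairedDart {v : Fin n → Bool} {c : Fin n} (h : IsPairedDart P v c) :
    v ∈ P.biUnion fun p => {p.1, p.2} := by
  rcases h with h | h
  · exact Finset.mem_biUnion.mpr ⟨_, h, by simp⟩
  · exact Finset.mem_biUnion.mpr ⟨_, h, by simp⟩

theorem exists_isPairedDart (hadj : ∀ p ∈ P, ∃ c : Fin n, p.2 = flipBit n p.1 c)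
    {v : Fin n → Bool} (hv : v ∈ P.biUnion fun p => {p.1, p.2}) : ∃ c, IsPairedDart P v c := by
  obtain ⟨⟨u, w⟩, hp, hvp⟩ := Finset.mem_biUnion.mp hv
  obtain ⟨c, rfl : w = flipBit n u c⟩ := hadj _ hp
  refine ⟨c, ?_⟩
  rcases Finset.mem_insert.mp hvp with rfl | hvw
  · exact Or.inl hp
  · rw [Finset.mem_singleton.mp hvw, IsPairedDart, flipBit_flipBit]
    exact Or.inr hp

theorem IsPairedDart.unique
    (hdisj : ∀ p ∈ P, ∀ q ∈ P, p ≠ q → ({p.1, p.2} : Finset (Fin n → Bool)) ∩ {q.1, q.2} = ∅)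
    {v : Fin n → Bool} {c c' : Fin n} (h : IsPairedDart P v c) (h' : IsPairedDart P v c') :
    c = c' := by
  have same_pair : ∀ p ∈ P, ∀ q ∈ P, v ∈ ({p.1, p.2} : Finset _) → v ∈ ({q.1, q.2} : Finset _) →
      p = q := by
    intro p hp q hq hvp hvq
    by_contra hpq
    simpa [hdisj p hp q hq hpq] using Finset.mem_inter.mpr ⟨hvp, hvq⟩
  rcases h with h | h <;> rcases h' with h' | h' <;>
    have := same_pair _ h _ h' (by simp) (by simp) <;>
    simp_all [Prod.ext_iff, flipBit_ne, (flipBit_ne _ _).symm, (flipBit_injective v).eq_iff]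

variable (P) in
noncomputable def pairedState (a : ℂ) : (Fin n → Bool) × Fin n → ℂ :=
  fun e => if IsPairedDart P e.1 e.2 then -((n : ℂ) - 1) * a else a

theorem pairedState_flipBit (a : ℂ) (v : Fin n → Bool) (c : Fin n) :
    pairedState P a (flipBit n v c, c) = pairedState P a (v, c) := by
  simp only [pairedState, isPairedDart_flipBit_iff]

theorem pairedState_of_notMem {a : ℂ} {v : Fin n → Bool}
    (hv : v ∉ P.biUnion fun p => {p.1, p.2}) (c : Fin n) : pairedState P a (v, c) = a :=
  if_neg (mt mem_biUnion_of_isPairedDart hv)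

theorem sum_pairedState_of_mem (hadj : ∀ p ∈ P, ∃ c : Fin n, p.2 = flipBit n p.1 c)
    (hdisj : ∀ p ∈ P, ∀ q ∈ P, p ≠ q → ({p.1, p.2} : Finset (Fin n → Bool)) ∩ {q.1, q.2} = ∅)
    (a : ℂ) {v : Fin n → Bool} (hv : v ∈ P.biUnion fun p => {p.1, p.2}) :
    ∑ c, pairedState P a (v, c) = 0 := by
  obtain ⟨c₀, h₀⟩ := exists_isPairedDart hadj hv
  have paired_iff : ∀ c, IsPairedDart P v c ↔ c = c₀ :=
    fun c => ⟨fun h => h.unique hdisj h₀, fun hc => hc ▸ h₀⟩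
  simpa [pairedState, paired_iff] using Fintype.sum_ite_neg_card_sub_one_mul_eq_zero c₀ a

end Pairing

end HypercubeWalk

theorem hypercube_paired_marked_stationary (n : ℕ)
    (P : Finset ((Fin n → Bool) × (Fin n → Bool)))
    (hadj : ∀ p ∈ P, ∃ c : Fin n, p.2 = HypercubeWalk.flipBit n p.1 c)
    (hdisj : ∀ p ∈ P, ∀ q ∈ P, p ≠ q →
      ({p.1, p.2} : Finset (Fin n → Bool)) ∩ {q.1, q.2} = ∅)
    (M : Finset (Fin n → Bool)) (hM : M = P.biUnion fun p => {p.1, p.2}) (a : ℂ) :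
    HypercubeWalk.step n M
      (fun e => if (e.1, HypercubeWalk.flipBit n e.1 e.2) ∈ P ∨
          (HypercubeWalk.flipBit n e.1 e.2, e.1) ∈ P
        then -((n : ℂ) - 1) * a else a)
    = fun e => if (e.1, HypercubeWalk.flipBit n e.1 e.2) ∈ P ∨
          (HypercubeWalk.flipBit n e.1 e.2, e.1) ∈ P
        then -((n : ℂ) - 1) * a else a := by
  subst hM
  refine HypercubeWalk.step_eq_self (ψ := HypercubeWalk.pairedState P a)
    (HypercubeWalk.pairedState_flipBit a) ?_ (fun v hv => ?_)
  · intro v hv c c'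
    rw [HypercubeWalk.pairedState_of_notMem hv, HypercubeWalk.pairedState_of_notMem hv]
  · exact HypercubeWalk.sum_pairedState_of_mem hadj hdisj a hv
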